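/- There is no probability measure on {−1,1}³ whose coordinate random variables X, Y, Z satisfy E[X] = E[Y] = E[Z] = 0 and E[XY] = E[YZ] = E[XZ] = −1/2, even though these moment values satisfy Bell's original inequality 1 + E[YZ] ≥ |E[XY] − E[XZ]| (since 1/2 ≥ 0). Hence Bell's original inequality is not sufficient for the existence of a joint probability distribution of three ±1-valued random variables with zero means. -/

import Mathlib

/-!
Pointwise on `{-1,1}³` one has `xy + yz + xz ≥ -1`, since at least two of the three signs
agree. Averaging against any probability weight gives `E[XY] + E[YZ] + E[XZ] ≥ -1`, which the
moment values `-1/2` violate, while Bell's original inequality reduces to `1/2 ≥ 0`.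
-/

/-- The sample space `{-1,1}³` with coordinates `X, Y, Z`. -/
abbrev SignTriple : Type := ({-1, 1} : Finset ℝ) × ({-1, 1} : Finset ℝ) × ({-1, 1} : Finset ℝ)

open Finset

lemma neg_one_le_mul_add_mul_add_mul {x y z : ℝ} (hx : x = -1 ∨ x = 1) (hy : y = -1 ∨ y = 1)
    (hz : z = -1 ∨ z = 1) : -1 ≤ x * y + y * z + x * z := by
  rcases hx with rfl | rfl <;> rcases hy with rfl | rfl <;> rcases hz with rfl | rfl <;> norm_num

lemma le_sum_mul_of_forall_le {ι : Type*} (s : Finset ι) {p f : ι → ℝ} {c : ℝ}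
    (hp : ∀ i ∈ s, 0 ≤ p i) (hsum : ∑ i ∈ s, p i = 1) (hf : ∀ i ∈ s, c ≤ f i) :
    c ≤ ∑ i ∈ s, p i * f i :=
  calc c = ∑ i ∈ s, p i * c := by rw [← sum_mul, hsum, one_mul]
    _ ≤ ∑ i ∈ s, p i * f i := sum_le_sum fun i hi => mul_le_mul_of_nonneg_left (hf i hi) (hp i hi)

lemma neg_one_le_sum_pair_correlations (p : SignTriple → ℝ) (hp : ∀ s, 0 ≤ p s)
    (hsum : ∑ s, p s = 1) :
    -1 ≤ (∑ s, p s * ((s.1 : ℝ) * s.2.1)) + (∑ s, p s * ((s.2.1 : ℝ) * s.2.2))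
      + ∑ s, p s * ((s.1 : ℝ) * s.2.2) := by
  simp only [← sum_add_distrib, ← mul_add]
  refine le_sum_mul_of_forall_le _ (fun s _ => hp s) hsum fun ⟨⟨x, hx⟩, ⟨y, hy⟩, ⟨z, hz⟩⟩ _ => ?_
  simp only [mem_insert, mem_singleton] at hx hy hz
  exact neg_one_le_mul_add_mul_add_mul hx hy hz

theorem bell_original_not_sufficient :
    (1 + (-1/2 : ℝ) ≥ |(-1/2 : ℝ) - (-1/2)|) ∧
    ¬ ∃ p : SignTriple → ℝ,
      (∀ s, 0 ≤ p s) ∧ (∑ s, p s = 1) ∧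
      (∑ s, p s * (s.1 : ℝ)) = 0 ∧
      (∑ s, p s * (s.2.1 : ℝ)) = 0 ∧
      (∑ s, p s * (s.2.2 : ℝ)) = 0 ∧
      (∑ s, p s * ((s.1 : ℝ) * (s.2.1 : ℝ))) = -1/2 ∧
      (∑ s, p s * ((s.2.1 : ℝ) * (s.2.2 : ℝ))) = -1/2 ∧
      (∑ s, p s * ((s.1 : ℝ) * (s.2.2 : ℝ))) = -1/2 := by
  refine ⟨by norm_num, ?_⟩
  rintro ⟨p, hp, hsum, -, -, -, hxy, hyz, hxz⟩
  have hbell := neg_one_le_sum_pair_correlations p hp hsum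
  rw [hxy, hyz, hxz] at hbell
  norm_num at hbell
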